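/- arXiv:2304.14181 — 5 statements merged into one kernel-verified Lean document; each statement's English description precedes it below -/
import Mathlib

section
/- The canonical map A → End_S(T) sending a ∈ A to the map (t ↦ t·a) is a bijective K-algebra anti-homomorphism; that is, it is a K-algebra isomorphism from A onto the opposite algebra End_S(T)^{op} of the algebra of S-linear endomorphisms of the left S-module T. In particular, End_S(T) is isomorphic to A. -/
/-!
Because `T` is faithful and finite-dimensional, `a ↦ (b₁·a, …, bₙ·a)` for a `K`-basis `b` of `T`
embeds `A` into `Tⁿ`, and self-injectivity splits this embedding: there are `v ∈ Tⁿ` and an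
`A`-linear `π : Tⁿ → A` with `π v = 1`. Such a retraction forces `T` to be balanced. A
biendomorphism `g` commutes with every `A`-linear map `Tⁿ → T`, in particular with
`w ↦ t·π(w)`; evaluating at `v` gives `g t = t·π(g v)`.
-/

section

variable {K A T : Type*} [Field K] [Ring A] [Algebra K A]
variable [AddCommGroup T] [Module Aᵐᵒᵖ T] [Module K T] [IsScalarTower K Aᵐᵒᵖ T]

instance : SMulCommClass (Module.End Aᵐᵒᵖ T) K T := SMulCommClass.symm _ _ _

instance : IsScalarTower K (Module.End Aᵐᵒᵖ T) T :=
  ⟨fun _ _ _ => rfl⟩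

section Biendomorphism

variable {R M : Type*} [Ring R] [AddCommGroup M] [Module R M]

theorem LinearMap.map_comp_biendomorphism {ι : Type*} [Finite ι]
    (h : (ι → M) →ₗ[R] M) (g : Module.End (Module.End R M) M) (v : ι → M) :
    h (g ∘ v) = g (h v) := by
  classical
  have := Fintype.ofFinite ι
  have h_single (i : ι) (x : M) : h (Pi.single i (g x)) = g (h (Pi.single i x)) :=
    (g.map_smul (h ∘ₗ LinearMap.single R (fun _ => M) i) x).symm
  conv_lhs => rw [← Finset.univ_sum_single (g ∘ v)]
  conv_rhs => rw [← Finset.univ_sum_single v]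
  simp only [map_sum, Function.comp_apply, h_single]

theorem DistribSMul.toLinearMap_bijective_of_retraction {ι : Type*} [Finite ι]
    (v : ι → M) (π : (ι → M) →ₗ[R] R) (hπ : π v = 1) :
    Function.Bijective
      (DistribSMul.toLinearMap (Module.End R M) M : R → Module.End (Module.End R M) M) := by
  refine ⟨fun r s hrs => ?_, fun g => ⟨π (g ∘ v), LinearMap.ext fun m => ?_⟩⟩
  · have hv : r • v = s • v := funext fun i => LinearMap.congr_fun hrs (v i)
    simpa [hπ] using congr_arg π hv
  · simpa [hπ] using (LinearMap.toSpanSingleton R M m ∘ₗ π).map_comp_biendomorphism g v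

variable (K) in
theorem exists_retraction_of_faithfulSMul [Algebra K R] [Module K M] [IsScalarTower K R M]
    [FiniteDimensional K M] [Module.Injective R R] [FaithfulSMul R M] :
    ∃ (n : ℕ) (v : Fin n → M) (π : (Fin n → M) →ₗ[R] R), π v = 1 := by
  let b := Module.finBasis K M
  let ψ : R →ₗ[R] (Fin _ → M) := LinearMap.pi fun i => LinearMap.toSpanSingleton R M (b i)
  have hψ : Function.Injective ψ := by
    refine (injective_iff_map_eq_zero ψ).2 fun r hr => ?_
    have hr_zero : DistribSMul.toLinearMap K M r = 0 := b.ext fun i => congr_fun hr i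
    exact eq_of_smul_eq_smul fun m => by
      rw [zero_smul]; simpa using LinearMap.congr_fun hr_zero m
  obtain ⟨π, hπ⟩ := Module.Injective.extension_property R R R _ ψ hψ LinearMap.id
  have hψ_one : ψ 1 = b := funext fun i => one_smul R (b i)
  exact ⟨_, b, π, hψ_one ▸ LinearMap.congr_fun hπ 1⟩

end Biendomorphism

theorem double_centralizer_of_selfinjective_general
    [FiniteDimensional K T]
    (hselfinj : Module.Injective Aᵐᵒᵖ A)
    (hfaithful : ∀ a : A, (∀ t : T, MulOpposite.op a • t = 0) → a = 0) :
    ∃ e : A ≃ₐ[K] (Module.End (Module.End Aᵐᵒᵖ T) T)ᵐᵒᵖ,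
      ∀ (a : A) (t : T), ((e a).unop : T →ₗ[Module.End Aᵐᵒᵖ T] T) t =
        MulOpposite.op a • t := by
  have : Module.Injective Aᵐᵒᵖ Aᵐᵒᵖ :=
    ((Module.Baer.of_injective hselfinj).of_equiv (MulOpposite.opLinearEquiv Aᵐᵒᵖ)).injective
  have : FaithfulSMul Aᵐᵒᵖ T := ⟨fun {a b} h => MulOpposite.unop_injective <| sub_eq_zero.1 <|
    hfaithful _ fun t => by simp [sub_smul, h t]⟩
  obtain ⟨n, v, π, hπ⟩ := exists_retraction_of_faithfulSMul K (R := Aᵐᵒᵖ) (M := T)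
  let e : Aᵐᵒᵖ ≃ₐ[K] Module.End (Module.End Aᵐᵒᵖ T) T :=
    .ofBijective (Algebra.lsmul K _ T) (DistribSMul.toLinearMap_bijective_of_retraction v π hπ)
  exact ⟨(AlgEquiv.opOp K A).trans (AlgEquiv.op e), fun _ _ => rfl⟩

/-- Let `K` be a field, `A` a finite-dimensional self-injective
`K`-algebra, and `T` a finite-dimensional faithful right `A`-module.  With
`S := End_A(T)` acting on `T` on the left by evaluation, the canonical map
`A → End_S(T)`, `a ↦ (t ↦ t·a)`, is a bijective `K`-algebra anti-homomorphism, i.e. a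
`K`-algebra isomorphism from `A` onto `End_S(T)ᵐᵒᵖ`.  In particular `End_S(T) ≅ A`. -/
theorem double_centralizer_of_selfinjective
    [FiniteDimensional K A] [FiniteDimensional K T]
    (hselfinj : Module.Injective Aᵐᵒᵖ A)
    (hfaithful : ∀ a : A, (∀ t : T, MulOpposite.op a • t = 0) → a = 0) :
    ∃ e : A ≃ₐ[K] (Module.End (Module.End Aᵐᵒᵖ T) T)ᵐᵒᵖ,
      ∀ (a : A) (t : T), ((e a).unop : T →ₗ[Module.End Aᵐᵒᵖ T] T) t =
        MulOpposite.op a • t :=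
  double_centralizer_of_selfinjective_general hselfinj hfaithful

end
end

section
/- T is projective as a left S-module. -/
/-!
If `f : M →ₗ[R] R` and `e : M` satisfy `f e = 1`, then `t ↦ (x ↦ f x • t)` is an
`End_R(M)`-linear section of the evaluation `End_R(M) → M`, `s ↦ s e`; hence `M` is a direct
summand of the free `End_R(M)`-module of rank one. For `T ≅ A ⊕ Q`, take `f` the first
projection and `e` the image of `(1, 0)`.
-/

section

variable {R M : Type*} [Semiring R] [AddCommMonoid M] [Module R M]

def LinearMap.smulRightEnd (f : M →ₗ[R] R) : M →ₗ[Module.End R M] Module.End R M where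
  toFun := f.smulRight
  map_add' t t' := by ext; simp
  map_smul' s t := by ext; simp

theorem Module.projective_end_of_map_eq_one (f : M →ₗ[R] R) (e : M) (he : f e = 1) :
    Projective (End R M) M :=
  .of_split f.smulRightEnd (LinearMap.toSpanSingleton (End R M) M e) <| by
    ext t; simp [LinearMap.smulRightEnd, he]

end

theorem projective_over_endomorphism_ring_general
    {A : Type*} [Ring A]
    {T Q : Type*} [AddCommGroup T] [Module Aᵐᵒᵖ T] [AddCommGroup Q] [Module Aᵐᵒᵖ Q]
    (iso : T ≃ₗ[Aᵐᵒᵖ] (A × Q)) :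
    Module.Projective (Module.End Aᵐᵒᵖ T) T :=
  Module.projective_end_of_map_eq_one
    ((MulOpposite.opLinearEquiv Aᵐᵒᵖ).toLinearMap ∘ₗ LinearMap.fst Aᵐᵒᵖ A Q ∘ₗ iso.toLinearMap)
    (iso.symm (1, 0)) (by simp)

/-- Let `K` be a commutative ring, `A` an associative unital
`K`-algebra, `T` a right `A`-module (a module over `Aᵐᵒᵖ`), and
`S := End_A(T)` the ring of right-`A`-module endomorphisms of `T`, acting on `T` on the
left by evaluation.  If `T ≅ A ⊕ Q` as right `A`-modules for some right `A`-module `Q`,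
then `T` is projective as a left `S`-module. -/
theorem projective_over_endomorphism_ring
    {K A : Type*} [CommRing K] [Ring A] [Algebra K A]
    {T Q : Type*} [AddCommGroup T] [Module Aᵐᵒᵖ T] [AddCommGroup Q] [Module Aᵐᵒᵖ Q]
    (iso : T ≃ₗ[Aᵐᵒᵖ] (A × Q)) :
    Module.Projective (Module.End Aᵐᵒᵖ T) T :=
  projective_over_endomorphism_ring_general iso
end

section
/- For all natural numbers i, j ≥ 0, ρ(X^i ⊗ X^j) = ( Σ_{k=0}^{i−1} X^k ⊗ X^{i+j−1−k} − Σ_{k=0}^{j−1} X^k ⊗ X^{i+j−1−k} ) · β. (The parenthesized element is the Demazure operator value ∂(X^i ⊗ X^j) = (X^i ⊗ X^j − X^j ⊗ X^i)/(X ⊗ 1 − 1 ⊗ X).) -/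
open scoped TensorProduct
open Finset

/-!
On `a := X ⊗ 1` and `b := 1 ⊗ X` the flip swaps `a` and `b`, so `ρ (a * b) = ρ (b * a)` reads
`(ρ a + ρ b) * (a - b) = 0` and regularity of `a - b` gives `ρ b = -ρ a`. The twisted Leibniz
rule then computes `ρ (aⁱ)` and `ρ (bʲ)` as geometric sums times `ρ a`, and
`ρ (aⁱ * bʲ) = bⁱ * ρ (bʲ) + ρ (aⁱ) * bʲ` assembles them into the Demazure operator.
-/

def IsTwistedDerivation {A : Type*} [Ring A] (σ : A →* A) (ρ : A → A) : Prop :=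
  ∀ u v, ρ (u * v) = σ u * ρ v + ρ u * v

lemma geom_sum₂_succ_eq_pow_add_mul {R : Type*} [Semiring R] (x y : R) (n : ℕ) :
    ∑ i ∈ range (n + 1), x ^ i * y ^ (n - i) =
      y ^ n + x * ∑ i ∈ range n, x ^ i * y ^ (n - 1 - i) := by
  rw [sum_range_succ', mul_sum, add_comm]
  congr 1
  · simp
  · refine sum_congr rfl fun i _ => ?_
    rw [pow_succ', mul_assoc, Nat.sub_sub, add_comm i 1]

namespace IsTwistedDerivation

variable {A : Type*} [Ring A] {σ : A →* A} {ρ : A → A}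

lemma map_one_eq_zero (h : IsTwistedDerivation σ ρ) : ρ 1 = 0 := by
  have h1 := h 1 1
  rw [mul_one, map_one, one_mul] at h1
  simpa using h1

lemma map_pow (h : IsTwistedDerivation σ ρ) {a : A} (ha : Commute (ρ a) a) :
    ∀ n : ℕ, ρ (a ^ n) = (∑ i ∈ range n, σ a ^ i * a ^ (n - 1 - i)) * ρ a
  | 0 => by simp [h.map_one_eq_zero]
  | n + 1 => by
    rw [pow_succ', h, map_pow h ha n, Nat.add_sub_cancel, geom_sum₂_succ_eq_pow_add_mul, (ha.pow_right n).eq,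
      add_mul, mul_assoc, add_comm]

lemma map_eq_neg_of_swap (h : IsTwistedDerivation σ ρ) {a b : A} (hσa : σ a = b) (hσb : σ b = a)
    (hab : Commute a b) (ha : Commute (ρ a) a) (hb : Commute (ρ b) b)
    (hreg : a - b ∈ nonZeroDivisorsRight A) : ρ b = -ρ a := by
  have hswap : b * ρ b + ρ a * b = a * ρ a + ρ b * a := by
    have hab' := h a b
    have hba := h b a
    rw [hσa] at hab'
    rw [hσb, ← hab.eq] at hba
    exact hab'.symm.trans hba
  have hzero : (ρ a + ρ b) * (a - b) = 0 := by
    rw [← hb.eq, ← ha.eq] at hswap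
    calc (ρ a + ρ b) * (a - b) = (ρ a * a + ρ b * a) - (ρ a * b + ρ b * b) := by noncomm_ring
      _ = 0 := by rw [← hswap]; noncomm_ring
  exact eq_neg_of_add_eq_zero_right (hreg _ hzero)

lemma map_pow_mul_pow (h : IsTwistedDerivation σ ρ) {a b : A} (hσa : σ a = b) (hσb : σ b = a)
    (hab : Commute a b) (hρb : ρ b = -ρ a) (ha : Commute (ρ a) a) (hb : Commute (ρ a) b)
    (i j : ℕ) :
    ρ (a ^ i * b ^ j) =
      (∑ k ∈ range i, a ^ k * b ^ (i + j - 1 - k) -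
        ∑ k ∈ range j, a ^ k * b ^ (i + j - 1 - k)) * ρ a := by
  have hρai : ρ (a ^ i) = (∑ k ∈ range i, a ^ k * b ^ (i - 1 - k)) * ρ a := by
    rw [h.map_pow ha, hσa, hab.symm.geom_sum₂_comm]
  have hρbj : ρ (b ^ j) = -((∑ k ∈ range j, a ^ k * b ^ (j - 1 - k)) * ρ a) := by
    rw [h.map_pow (hρb ▸ hb.neg_left), hσb, hρb, mul_neg]
  have hleft : (∑ k ∈ range i, a ^ k * b ^ (i - 1 - k)) * b ^ j =
      ∑ k ∈ range i, a ^ k * b ^ (i + j - 1 - k) := by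
    rw [sum_mul]
    refine sum_congr rfl fun k hk => ?_
    rw [mul_assoc, ← pow_add]
    congr 2
    have := mem_range.mp hk
    omega
  have hright : b ^ i * ∑ k ∈ range j, a ^ k * b ^ (j - 1 - k) =
      ∑ k ∈ range j, a ^ k * b ^ (i + j - 1 - k) := by
    rw [mul_sum]
    refine sum_congr rfl fun k hk => ?_
    rw [← mul_assoc, ((hab.pow_pow k i).symm).eq, mul_assoc, ← pow_add]
    congr 2
    have := mem_range.mp hk
    omega
  rw [h, _root_.map_pow, hσa, hρai, hρbj, mul_assoc _ (ρ a), (hb.pow_right j).eq, ← mul_assoc,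
    hleft, mul_neg, ← mul_assoc, hright, sub_mul]
  abel

end IsTwistedDerivation

theorem rho_eq_demazure_mul_beta_general
    {K B : Type*} [CommRing K] [Ring B] [Algebra K B] (X : B)
    (ρ : B ⊗[K] B →ₗ[K] B ⊗[K] B)
    (hLeib : ∀ u v : B ⊗[K] B,
      ρ (u * v) = (TensorProduct.comm K B B) u * ρ v + ρ u * v)
    (hc1 : Commute (ρ (X ⊗ₜ[K] 1)) (X ⊗ₜ[K] 1))
    (hc2 : Commute (ρ (X ⊗ₜ[K] 1)) ((1 : B) ⊗ₜ[K] X))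
    (hc4 : Commute (ρ ((1 : B) ⊗ₜ[K] X)) ((1 : B) ⊗ₜ[K] X))
    (hregR : ∀ u : B ⊗[K] B, u * (X ⊗ₜ[K] 1 - (1 : B) ⊗ₜ[K] X) = 0 → u = 0) :
    ∀ i j : ℕ,
      ρ ((X ^ i) ⊗ₜ[K] (X ^ j)) =
        ((∑ k ∈ Finset.range i, (X ^ k) ⊗ₜ[K] (X ^ (i + j - 1 - k))) -
          ∑ k ∈ Finset.range j, (X ^ k) ⊗ₜ[K] (X ^ (i + j - 1 - k))) * ρ (X ⊗ₜ[K] 1) := by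
  intro i j
  have hρ : IsTwistedDerivation
      (Algebra.TensorProduct.comm K B B : B ⊗[K] B →* B ⊗[K] B) ρ := hLeib
  have hσa : Algebra.TensorProduct.comm K B B (X ⊗ₜ[K] 1) = (1 : B) ⊗ₜ[K] X := rfl
  have hσb : Algebra.TensorProduct.comm K B B ((1 : B) ⊗ₜ[K] X) = X ⊗ₜ[K] 1 := rfl
  have hab : Commute (X ⊗ₜ[K] (1 : B)) ((1 : B) ⊗ₜ[K] X) := by
    simp [Commute, SemiconjBy, Algebra.TensorProduct.tmul_mul_tmul]
  have hρb := hρ.map_eq_neg_of_swap hσa hσb hab hc1 hc4 ((mem_nonZeroDivisorsRight_iff _).mpr hregR)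
  simpa [Algebra.TensorProduct.tmul_pow, Algebra.TensorProduct.tmul_mul_tmul] using
    hρ.map_pow_mul_pow hσa hσb hab hρb hc1 hc2 i j

/-- Let `K` be a commutative ring, `B` an associative unital `K`-algebra and
`X ∈ B`.  Let `σ` be the flip on `B ⊗[K] B` and let `ρ` be a `K`-linear endomorphism of
`B ⊗[K] B` satisfying the `σ`-twisted Leibniz rule.  Set `β := ρ (X ⊗ 1)`.  Assume `ρ (X ⊗ 1)`
and `ρ (1 ⊗ X)` commute with both `X ⊗ 1` and `1 ⊗ X`, and that `X ⊗ 1 − 1 ⊗ X` is a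
non-zero-divisor in `B ⊗[K] B`.  Then for all natural numbers `i, j ≥ 0`,
`ρ (Xⁱ ⊗ Xʲ) = (∑_{k<i} Xᵏ ⊗ X^{i+j−1−k} − ∑_{k<j} Xᵏ ⊗ X^{i+j−1−k}) · β`. -/
theorem rho_eq_demazure_mul_beta
    {K B : Type*} [CommRing K] [Ring B] [Algebra K B] (X : B)
    (ρ : B ⊗[K] B →ₗ[K] B ⊗[K] B)
    (hLeib : ∀ u v : B ⊗[K] B,
      ρ (u * v) = (TensorProduct.comm K B B) u * ρ v + ρ u * v)
    (hc1 : Commute (ρ (X ⊗ₜ[K] 1)) (X ⊗ₜ[K] 1))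
    (hc2 : Commute (ρ (X ⊗ₜ[K] 1)) ((1 : B) ⊗ₜ[K] X))
    (hc3 : Commute (ρ ((1 : B) ⊗ₜ[K] X)) (X ⊗ₜ[K] 1))
    (hc4 : Commute (ρ ((1 : B) ⊗ₜ[K] X)) ((1 : B) ⊗ₜ[K] X))
    (hregL : ∀ u : B ⊗[K] B, (X ⊗ₜ[K] 1 - (1 : B) ⊗ₜ[K] X) * u = 0 → u = 0)
    (hregR : ∀ u : B ⊗[K] B, u * (X ⊗ₜ[K] 1 - (1 : B) ⊗ₜ[K] X) = 0 → u = 0) :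
    ∀ i j : ℕ,
      ρ ((X ^ i) ⊗ₜ[K] (X ^ j)) =
        ((∑ k ∈ Finset.range i, (X ^ k) ⊗ₜ[K] (X ^ (i + j - 1 - k))) -
          ∑ k ∈ Finset.range j, (X ^ k) ⊗ₜ[K] (X ^ (i + j - 1 - k))) * ρ (X ⊗ₜ[K] 1) :=
  rho_eq_demazure_mul_beta_general X ρ hLeib hc1 hc2 hc4 hregR
end

section
/- For every integer i ≥ 1, ρ(X^i ⊗ 1) = ( Σ_{k=0}^{i−1} X^k ⊗ X^{i−1−k} ) · β and ρ(1 ⊗ X^i) = −( Σ_{k=0}^{i−1} X^k ⊗ X^{i−1−k} ) · β; in particular ρ(X^i ⊗ 1) = −ρ(1 ⊗ X^i). -/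
/-!
Both `X ⊗ 1` and `1 ⊗ X` commute and are swapped by the flip, so the twisted Leibniz rule
expands `ρ` on their powers into a two-variable geometric sum times `ρ` of the generator.
Applying the rule to the two factorisations of `X ⊗ X` gives
`(X ⊗ 1 - 1 ⊗ X) * (ρ (1 ⊗ X) + ρ (X ⊗ 1)) = 0`, whence `ρ (1 ⊗ X) = -ρ (X ⊗ 1)`.
-/

open scoped TensorProduct

open Finset

section TwistedLeibniz

variable {A : Type*} [Ring A] {σ : A →+* A} {ρ : A → A}

theorem apply_one_eq_zero_of_twisted_leibniz
    (hρ : ∀ u v, ρ (u * v) = σ u * ρ v + ρ u * v) : ρ 1 = 0 := by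
  have h := hρ 1 1
  simp only [mul_one, map_one, one_mul] at h
  exact left_eq_add.mp h

theorem twisted_leibniz_pow (hρ : ∀ u v, ρ (u * v) = σ u * ρ v + ρ u * v) {x : A}
    (hx : Commute (ρ x) x) (hσx : Commute x (σ x)) (n : ℕ) :
    ρ (x ^ n) = (∑ k ∈ range n, x ^ k * σ x ^ (n - 1 - k)) * ρ x := by
  induction n with
  | zero => simp [apply_one_eq_zero_of_twisted_leibniz hρ]
  | succ n ih =>
    rw [pow_succ', hρ, ih, Nat.add_sub_cancel, hσx.geom_sum₂_succ_eq, (hx.pow_right n).eq,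
      add_mul, mul_assoc, add_comm]

theorem twisted_leibniz_apply_eq_neg_of_swap (hρ : ∀ u v, ρ (u * v) = σ u * ρ v + ρ u * v)
    {x y : A} (hσx : σ x = y) (hσy : σ y = x) (hxy : Commute x y)
    (hx : Commute (ρ x) y) (hy : Commute (ρ y) x) (hreg : IsLeftRegular (x - y)) :
    ρ y = -ρ x := by
  have h := congrArg ρ hxy.eq
  rw [hρ, hρ, hσx, hσy, hx.eq, hy.eq] at h
  have hzero : (x - y) * (ρ y + ρ x) = (x - y) * 0 := by
    rw [mul_zero, sub_mul, mul_add, mul_add, h]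
    abel
  exact eq_neg_of_add_eq_zero_left (hreg hzero)

end TwistedLeibniz

theorem rho_pow_tmul_one_general
    {K B : Type*} [CommRing K] [Ring B] [Algebra K B] (X : B)
    (ρ : B ⊗[K] B →ₗ[K] B ⊗[K] B)
    (hLeib : ∀ u v : B ⊗[K] B,
      ρ (u * v) = (TensorProduct.comm K B B) u * ρ v + ρ u * v)
    (hc1 : Commute (ρ (X ⊗ₜ[K] 1)) (X ⊗ₜ[K] 1))
    (hc2 : Commute (ρ (X ⊗ₜ[K] 1)) ((1 : B) ⊗ₜ[K] X))
    (hc3 : Commute (ρ ((1 : B) ⊗ₜ[K] X)) (X ⊗ₜ[K] 1))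
    (hregL : ∀ u : B ⊗[K] B, (X ⊗ₜ[K] 1 - (1 : B) ⊗ₜ[K] X) * u = 0 → u = 0) :
    ∀ i : ℕ, 1 ≤ i →
      ρ ((X ^ i) ⊗ₜ[K] 1) =
          (∑ k ∈ Finset.range i, (X ^ k) ⊗ₜ[K] (X ^ (i - 1 - k))) * ρ (X ⊗ₜ[K] 1) ∧
        ρ ((1 : B) ⊗ₜ[K] (X ^ i)) =
          -((∑ k ∈ Finset.range i, (X ^ k) ⊗ₜ[K] (X ^ (i - 1 - k))) * ρ (X ⊗ₜ[K] 1)) ∧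
        ρ ((X ^ i) ⊗ₜ[K] 1) = - ρ ((1 : B) ⊗ₜ[K] (X ^ i)) := by
  intro i _
  let σ : B ⊗[K] B →+* B ⊗[K] B := (Algebra.TensorProduct.comm K B B).toRingHom
  have hρ : ∀ u v, ρ (u * v) = σ u * ρ v + ρ u * v := hLeib
  have hσx : σ (X ⊗ₜ[K] 1) = 1 ⊗ₜ[K] X := rfl
  have hσy : σ (1 ⊗ₜ[K] X) = X ⊗ₜ[K] 1 := rfl
  have hxy : Commute (X ⊗ₜ[K] (1 : B)) (1 ⊗ₜ[K] X) := by
    simp [Commute, SemiconjBy, Algebra.TensorProduct.tmul_mul_tmul]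
  have hpow_x : (X ⊗ₜ[K] (1 : B)) ^ i = (X ^ i) ⊗ₜ[K] 1 := by
    simp [Algebra.TensorProduct.tmul_pow]
  have hpow_y : ((1 : B) ⊗ₜ[K] X) ^ i = 1 ⊗ₜ[K] (X ^ i) := by
    simp [Algebra.TensorProduct.tmul_pow]
  have hsum : ∑ k ∈ range i, (X ⊗ₜ[K] (1 : B)) ^ k * (1 ⊗ₜ[K] X) ^ (i - 1 - k) =
      ∑ k ∈ range i, (X ^ k) ⊗ₜ[K] (X ^ (i - 1 - k)) := by
    simp [Algebra.TensorProduct.tmul_pow, Algebra.TensorProduct.tmul_mul_tmul]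
  have hneg := twisted_leibniz_apply_eq_neg_of_swap hρ hσx hσy hxy hc2 hc3
    (isLeftRegular_iff_right_eq_zero_of_mul.mpr hregL)
  have h1 : ρ ((X ^ i) ⊗ₜ[K] 1) =
      (∑ k ∈ range i, (X ^ k) ⊗ₜ[K] (X ^ (i - 1 - k))) * ρ (X ⊗ₜ[K] 1) := by
    rw [← hpow_x, twisted_leibniz_pow hρ hc1 (hσx ▸ hxy), hσx, hsum]
  have h2 : ρ ((1 : B) ⊗ₜ[K] (X ^ i)) =
      -((∑ k ∈ range i, (X ^ k) ⊗ₜ[K] (X ^ (i - 1 - k))) * ρ (X ⊗ₜ[K] 1)) := by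
    rw [← hpow_y, twisted_leibniz_pow hρ (hneg ▸ hc2.neg_left) (hσy ▸ hxy.symm), hσy, hneg,
      ← hxy.geom_sum₂_comm, hsum, mul_neg]
  exact ⟨h1, h2, by rw [h1, h2, neg_neg]⟩

/-- In the Demazure-operator setting for a twisted derivation `ρ` on
`B ⊗[K] B` (with `σ` the flip, `β := ρ (X ⊗ 1)`, commutation assumptions, and
`X ⊗ 1 − 1 ⊗ X` a non-zero-divisor), for every integer `i ≥ 1` one has
`ρ (Xⁱ ⊗ 1) = (∑_{k<i} Xᵏ ⊗ X^{i−1−k}) · β`,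
`ρ (1 ⊗ Xⁱ) = −(∑_{k<i} Xᵏ ⊗ X^{i−1−k}) · β`; in particular
`ρ (Xⁱ ⊗ 1) = −ρ (1 ⊗ Xⁱ)`. -/
theorem rho_pow_tmul_one
    {K B : Type*} [CommRing K] [Ring B] [Algebra K B] (X : B)
    (ρ : B ⊗[K] B →ₗ[K] B ⊗[K] B)
    (hLeib : ∀ u v : B ⊗[K] B,
      ρ (u * v) = (TensorProduct.comm K B B) u * ρ v + ρ u * v)
    (hc1 : Commute (ρ (X ⊗ₜ[K] 1)) (X ⊗ₜ[K] 1))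
    (hc2 : Commute (ρ (X ⊗ₜ[K] 1)) ((1 : B) ⊗ₜ[K] X))
    (hc3 : Commute (ρ ((1 : B) ⊗ₜ[K] X)) (X ⊗ₜ[K] 1))
    (hc4 : Commute (ρ ((1 : B) ⊗ₜ[K] X)) ((1 : B) ⊗ₜ[K] X))
    (hregL : ∀ u : B ⊗[K] B, (X ⊗ₜ[K] 1 - (1 : B) ⊗ₜ[K] X) * u = 0 → u = 0)
    (hregR : ∀ u : B ⊗[K] B, u * (X ⊗ₜ[K] 1 - (1 : B) ⊗ₜ[K] X) = 0 → u = 0) :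
    ∀ i : ℕ, 1 ≤ i →
      ρ ((X ^ i) ⊗ₜ[K] 1) =
          (∑ k ∈ Finset.range i, (X ^ k) ⊗ₜ[K] (X ^ (i - 1 - k))) * ρ (X ⊗ₜ[K] 1) ∧
        ρ ((1 : B) ⊗ₜ[K] (X ^ i)) =
          -((∑ k ∈ Finset.range i, (X ^ k) ⊗ₜ[K] (X ^ (i - 1 - k))) * ρ (X ⊗ₜ[K] 1)) ∧
        ρ ((X ^ i) ⊗ₜ[K] 1) = - ρ ((1 : B) ⊗ₜ[K] (X ^ i)) :=
  rho_pow_tmul_one_general X ρ hLeib hc1 hc2 hc3 hregL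
end

section
/- For all integers a, b, c with N ≥ a ≥ c ≥ 1 and N ≥ b ≥ c, the element D(a,c)·U(c,a) commutes with the element D(b,c)·U(c,b). -/
/-- The descending product `g_a g_{a−1} ⋯ g_c` (for `a ≥ c`). -/
def braidDesc {M : Type*} [Monoid M] (g : ℕ → M) (a c : ℕ) : M :=
  ((List.range (a + 1 - c)).map fun k => g (a - k)).prod

/-- The ascending product `g_c g_{c+1} ⋯ g_a` (for `a ≥ c`). -/
def braidAsc {M : Type*} [Monoid M] (g : ℕ → M) (c a : ℕ) : M :=
  ((List.range (a + 1 - c)).map fun k => g (c + k)).prod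

/-!
Write `L a = D(a,c)·U(c,a)`. Then `L (c-1) = 1` and `L (a+1) = g_{a+1} (L a) g_{a+1}`, and
`g_j` commutes with `L a` once `j ≥ a + 2`; so it suffices that `L a` commutes with `L (a+1)`.
With `s = g_{a+1}`, `t = g_{a+2}`, `X = L a` this is the braid-group identity: if `sts = tst`
and `X` commutes with `t` and with `sXs`, then `sXs` commutes with `t(sXs)t`, because both
products rewrite to `st·(X·sXs)·ts` and `st·(sXs·X)·ts`. Induction on `a` finishes the argument.
-/

section
variable {M : Type*} [Monoid M]

theorem Commute.conj_braid {s t X : M} (hst : s * t * s = t * s * t) (hXt : Commute X t)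
    (hX : Commute X (s * X * s)) : Commute (s * X * s) (t * (s * X * s) * t) := by
  have hmid : X * (s * t * s) * X = t * (X * s * X) * t := by
    rw [hst]
    simp only [mul_assoc]
    rw [hXt.left_comm, hXt.symm.eq]
  have hXY : s * X * s * (t * (s * X * s) * t) = s * t * (X * (s * X * s)) * t * s :=
    calc s * X * s * (t * (s * X * s) * t)
        = s * (X * (s * t * s) * X) * s * t := by simp only [mul_assoc]
      _ = s * t * (X * s * X) * (s * t * s) := by rw [hmid, hst]; simp only [mul_assoc]
      _ = s * t * (X * (s * X * s)) * t * s := by simp only [mul_assoc]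
  have hYX : t * (s * X * s) * t * (s * X * s) = s * t * ((s * X * s) * X) * t * s :=
    calc t * (s * X * s) * t * (s * X * s)
        = t * s * (X * (s * t * s) * X) * s := by simp only [mul_assoc]
      _ = (t * s * t) * (X * s * X) * t * s := by rw [hmid]; simp only [mul_assoc]
      _ = s * t * ((s * X * s) * X) * t * s := by rw [← hst]; simp only [mul_assoc]
  change _ * _ = _ * _
  rw [hXY, hYX, hX.eq]

variable {g : ℕ → M} {N a b c : ℕ}

theorem braidDesc_succ (h : c ≤ a + 1) :
    braidDesc g (a + 1) c = g (a + 1) * braidDesc g a c := by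
  simp [braidDesc, show a + 1 + 1 - c = a + 1 - c + 1 by omega, List.range_succ_eq_map,
    Function.comp_def]

theorem braidAsc_succ (h : c ≤ a + 1) :
    braidAsc g c (a + 1) = braidAsc g c a * g (a + 1) := by
  simp [braidAsc, show a + 1 + 1 - c = a + 1 - c + 1 by omega, List.range_succ,
    Nat.add_sub_cancel' h]

theorem braidDesc_of_lt (h : a < c) : braidDesc g a c = 1 := by
  simp [braidDesc, Nat.sub_eq_zero_of_le h]

theorem braidAsc_of_lt (h : a < c) : braidAsc g c a = 1 := by
  simp [braidAsc, Nat.sub_eq_zero_of_le h]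

theorem Commute.braidDesc_right {x : M} (h : ∀ i, c ≤ i → i ≤ a → Commute x (g i)) :
    Commute x (braidDesc g a c) :=
  Commute.list_prod_right _ _ <| by
    simp only [List.mem_map, List.mem_range, forall_exists_index, and_imp]
    rintro _ k hk rfl
    exact h _ (by omega) (by omega)

theorem Commute.braidAsc_right {x : M} (h : ∀ i, c ≤ i → i ≤ a → Commute x (g i)) :
    Commute x (braidAsc g c a) :=
  Commute.list_prod_right _ _ <| by
    simp only [List.mem_map, List.mem_range, forall_exists_index, and_imp]
    rintro _ k hk rfl
    exact h _ (by omega) (by omega)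

variable (g) in
/-- The Jucys–Murphy element `D(a,c)·U(c,a)`, equal to `1` when `a < c`. -/
def jucysMurphy (c a : ℕ) : M :=
  braidDesc g a c * braidAsc g c a

theorem jucysMurphy_succ (h : c ≤ a + 1) :
    jucysMurphy g c (a + 1) = g (a + 1) * jucysMurphy g c a * g (a + 1) := by
  simp only [jucysMurphy, braidDesc_succ h, braidAsc_succ h, mul_assoc]

theorem jucysMurphy_of_lt (h : a < c) : jucysMurphy g c a = 1 := by
  rw [jucysMurphy, braidDesc_of_lt h, braidAsc_of_lt h, one_mul]

theorem Commute.jucysMurphy_right {x : M} (h : ∀ i, c ≤ i → i ≤ a → Commute x (g i)) :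
    Commute x (jucysMurphy g c a) :=
  (Commute.braidDesc_right h).mul_right (Commute.braidAsc_right h)

theorem commute_jucysMurphy_of_far
    (hcomm : ∀ i j, 1 ≤ i → 1 ≤ j → i ≤ N → j ≤ N →
      (i + 2 ≤ j ∨ j + 2 ≤ i) → g i * g j = g j * g i)
    {j : ℕ} (hc : 1 ≤ c) (hj : a + 2 ≤ j) (hjN : j ≤ N) :
    Commute (g j) (jucysMurphy g c a) :=
  Commute.jucysMurphy_right fun i hci hia =>
    hcomm j i (by omega) (by omega) hjN (by omega) (Or.inr (by omega))

theorem jucysMurphy_commute_succ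
    (hbraid : ∀ k, 1 ≤ k → k + 1 ≤ N →
      g k * g (k + 1) * g k = g (k + 1) * g k * g (k + 1))
    (hcomm : ∀ i j, 1 ≤ i → 1 ≤ j → i ≤ N → j ≤ N →
      (i + 2 ≤ j ∨ j + 2 ≤ i) → g i * g j = g j * g i)
    (hc : 1 ≤ c) (haN : a + 1 ≤ N) :
    Commute (jucysMurphy g c a) (jucysMurphy g c (a + 1)) := by
  induction a with
  | zero => rw [jucysMurphy_of_lt hc]; exact Commute.one_left _
  | succ a ih =>
    obtain hac | hca := lt_or_ge (a + 1) c
    · rw [jucysMurphy_of_lt hac]; exact Commute.one_left _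
    rw [jucysMurphy_succ (a := a + 1) (by omega), jucysMurphy_succ hca]
    have hX := ih (by omega)
    rw [jucysMurphy_succ hca] at hX
    exact Commute.conj_braid (hbraid (a + 1) (by omega) haN)
      (commute_jucysMurphy_of_far hcomm hc le_rfl haN).symm hX

theorem jucysMurphy_commute
    (hbraid : ∀ k, 1 ≤ k → k + 1 ≤ N →
      g k * g (k + 1) * g k = g (k + 1) * g k * g (k + 1))
    (hcomm : ∀ i j, 1 ≤ i → 1 ≤ j → i ≤ N → j ≤ N →
      (i + 2 ≤ j ∨ j + 2 ≤ i) → g i * g j = g j * g i)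
    (hc : 1 ≤ c) (hca : c ≤ a) (hab : a ≤ b) (hbN : b ≤ N) :
    Commute (jucysMurphy g c a) (jucysMurphy g c b) := by
  induction b, hab using Nat.le_induction with
  | base => exact Commute.refl _
  | succ b hab ih =>
    obtain rfl | hab := hab.eq_or_lt
    · exact jucysMurphy_commute_succ hbraid hcomm hc hbN
    have hfar := (commute_jucysMurphy_of_far hcomm hc (a := a) (by omega) hbN).symm
    rw [jucysMurphy_succ (by omega)]
    exact (hfar.mul_right (ih (by omega))).mul_right hfar

end

theorem braidDesc_mul_asc_commute_general
    {M : Type*} [Monoid M] (N : ℕ) (g : ℕ → M)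
    (hbraid : ∀ k, 1 ≤ k → k + 1 ≤ N →
      g k * g (k + 1) * g k = g (k + 1) * g k * g (k + 1))
    (hcomm : ∀ i j, 1 ≤ i → 1 ≤ j → i ≤ N → j ≤ N →
      (i + 2 ≤ j ∨ j + 2 ≤ i) → g i * g j = g j * g i)
    (a b c : ℕ) (hc : 1 ≤ c) (hca : c ≤ a) (haN : a ≤ N) (hcb : c ≤ b) (hbN : b ≤ N) :
    Commute (braidDesc g a c * braidAsc g c a) (braidDesc g b c * braidAsc g c b) := by
  obtain hab | hba := le_total a b
  · exact jucysMurphy_commute hbraid hcomm hc hca hab hbN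
  · exact (jucysMurphy_commute hbraid hcomm hc hcb hba haN).symm

/-- Let `M` be a monoid, `N ≥ 1`, and let `g 1, …, g N` satisfy the
type-A braid relations.  For all `a, b, c` with `N ≥ a ≥ c ≥ 1` and `N ≥ b ≥ c`, the
element `D(a,c)·U(c,a)` commutes with `D(b,c)·U(c,b)`. -/
theorem braidDesc_mul_asc_commute
    {M : Type*} [Monoid M] (N : ℕ) (hN : 1 ≤ N) (g : ℕ → M)
    (hbraid : ∀ k, 1 ≤ k → k + 1 ≤ N →
      g k * g (k + 1) * g k = g (k + 1) * g k * g (k + 1))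
    (hcomm : ∀ i j, 1 ≤ i → 1 ≤ j → i ≤ N → j ≤ N →
      (i + 2 ≤ j ∨ j + 2 ≤ i) → g i * g j = g j * g i)
    (a b c : ℕ) (hc : 1 ≤ c) (hca : c ≤ a) (haN : a ≤ N) (hcb : c ≤ b) (hbN : b ≤ N) :
    Commute (braidDesc g a c * braidAsc g c a) (braidDesc g b c * braidAsc g c b) :=
  braidDesc_mul_asc_commute_general N g hbraid hcomm a b c hc hca haN hcb hbN
end
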